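/- Let R = R(S,A) be a classifier, nonconstant within each group, satisfying P(Y=1 | R=1, A=a) = p and P(Y=1 | R=0, A=a) = q for both groups a, with (p,q) ≠ (π,π) and q ≤ p. Then the deviation from separation Δ_sep(R) := E_{A,Y} TV(P(R | A,Y), P(R | Y)) satisfies Δ_sep(R) = K · ((1−μ)/(p−π) − μ(p−π)/(π(1−π))), where K := 2 P(A=0) P(A=1) |π¹ − π⁰|, π := P(Y=1), and μ := P(R=1). Moreover, for fixed μ, the right-hand side is nonincreasing in p on p > π. -/

import Mathlib

open Finset

attribute [local instance] Classical.propDecidable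

/-!
Two-group setting.  `(Ω, P)` is a finite probability space, `Y` a `{0,1}`-valued
target, `A` a `{0,1}`-valued group attribute, and `S` a (finite-valued) score.
Events are predicates on `Ω`; `prob` and `cprob` are (conditional) probabilities.
-/

variable {Ω : Type*} [Fintype Ω]

/-- Probability of an event under a pmf `P` on the finite outcome space `Ω`. -/
noncomputable def prob (P : Ω → ℝ) (E : Ω → Prop) : ℝ :=
  ∑ ω, if E ω then P ω else 0

/-- Conditional probability `P(E ∣ F)`. -/
noncomputable def cprob (P : Ω → ℝ) (E F : Ω → Prop) : ℝ :=
  prob P (fun ω => E ω ∧ F ω) / prob P F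

/-- `P` is a probability mass function on `Ω`. -/
structure IsPMF (P : Ω → ℝ) : Prop where
  nonneg : ∀ ω, 0 ≤ P ω
  sum_one : ∑ ω, P ω = 1

/-- The score `S` is group-calibrated: `P(Y = 1 ∣ S = s, A = a) = s` whenever
`P(S = s, A = a) > 0`. -/
def GroupCalibrated (P : Ω → ℝ) (Y A : Ω → Bool) (S : Ω → ℝ) : Prop :=
  ∀ (sv : ℝ) (a : Bool), 0 < prob P (fun ω => S ω = sv ∧ A ω = a) →
    cprob P (fun ω => Y ω = true) (fun ω => S ω = sv ∧ A ω = a) = sv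

/-- `R` is a classifier based on `(S, A)`: within each group, `R` depends on `S`
alone, i.e. `P(R = 1 ∣ S, Y, A = a) = P(R = 1 ∣ S, A = a)`. -/
def IsClassifier (P : Ω → ℝ) (Y A : Ω → Bool) (S : Ω → ℝ) (R : Ω → Bool) : Prop :=
  ∀ (a : Bool) (sv : ℝ) (yv : Bool),
    0 < prob P (fun ω => S ω = sv ∧ Y ω = yv ∧ A ω = a) →
    cprob P (fun ω => R ω = true) (fun ω => S ω = sv ∧ Y ω = yv ∧ A ω = a) =
      cprob P (fun ω => R ω = true) (fun ω => S ω = sv ∧ A ω = a)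

/-- `(p, q)` belongs to the subgroup-feasible region `C^a`: it is attained as
`(P(Y = 1 ∣ R = 1, A = a), P(Y = 1 ∣ R = 0, A = a))` by some `{0,1}`-valued `R`
with `P(R = 1 ∣ S, Y, A = a) = P(R = 1 ∣ S, A = a)` and `0 < P(R = 1 ∣ A = a) < 1`.
Such a (possibly randomized) classifier is determined within the group by its
selection rule `τ sv = P(R = 1 ∣ S = sv, A = a)`; by group-calibration,
`P(R = 1 ∣ A = a) = ∑_s P(S = s ∣ a) τ s` and
`P(Y = 1, R = 1 ∣ A = a) = ∑_s s P(S = s ∣ a) τ s`. -/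
def SubgroupFeasible (P : Ω → ℝ) (Y A : Ω → Bool) (S : Ω → ℝ)
    (a : Bool) (p q : ℝ) : Prop :=
  ∃ τ : ℝ → ℝ, (∀ sv, 0 ≤ τ sv ∧ τ sv ≤ 1) ∧
    0 < (∑ sv ∈ Finset.univ.image S,
          cprob P (fun ω => S ω = sv) (fun ω => A ω = a) * τ sv) ∧
    (∑ sv ∈ Finset.univ.image S,
          cprob P (fun ω => S ω = sv) (fun ω => A ω = a) * τ sv) < 1 ∧
    p = (∑ sv ∈ Finset.univ.image S,
          sv * cprob P (fun ω => S ω = sv) (fun ω => A ω = a) * τ sv) /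
        (∑ sv ∈ Finset.univ.image S,
          cprob P (fun ω => S ω = sv) (fun ω => A ω = a) * τ sv) ∧
    q = (cprob P (fun ω => Y ω = true) (fun ω => A ω = a) -
          (∑ sv ∈ Finset.univ.image S,
            sv * cprob P (fun ω => S ω = sv) (fun ω => A ω = a) * τ sv)) /
        (1 - (∑ sv ∈ Finset.univ.image S,
          cprob P (fun ω => S ω = sv) (fun ω => A ω = a) * τ sv))

/-- Deviation from separation
`Δ_sep(R) = E_{A,Y} TV(P(R ∣ A, Y), P(R ∣ Y))`, with
`TV(P, Q) = (1/2) ∑_r |P(r) − Q(r)|`. -/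
noncomputable def deltaSep (P : Ω → ℝ) (Y A R : Ω → Bool) : ℝ :=
  ∑ a : Bool, ∑ y : Bool,
    prob P (fun ω => A ω = a) * cprob P (fun ω => Y ω = y) (fun ω => A ω = a) *
      ((1 / 2) * ∑ r : Bool,
        |cprob P (fun ω => R ω = r) (fun ω => A ω = a ∧ Y ω = y) -
          cprob P (fun ω => R ω = r) (fun ω => Y ω = y)|)


/-!
The hypotheses on `p` and `q` say that `Y` is independent of `A` given `R`. For a binary `R`
the separation term of group `a` and label `y` is
`|P(R = 1, A = a, Y = y) - P(A = a, Y = y) P(R = 1 ∣ Y = y)|`, and the two groups together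
contribute `2 |det T_y| / P(Y = y)`, where `T_y` is the `2 × 2` table `P(R = r, A = a, Y = y)`.
Conditional independence rescales the rows of the table `T` of `P(R = r, A = a)`, so that
`det T_1 = p q det T`, `det T_0 = (1 - p)(1 - q) det T` and
`P(A = 0) P(A = 1) (π¹ - π⁰) = (p - q) det T`. With `π = p μ + q (1 - μ)` the formula for
`Δ_sep` reduces to an identity between rational functions of `p`, `q`, `μ`.
-/

section Probability

variable {P : Ω → ℝ}

theorem prob_congr {E F : Ω → Prop} (h : ∀ ω, E ω ↔ F ω) : prob P E = prob P F := by
  simp only [prob, h]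

theorem prob_and_comm (E F : Ω → Prop) :
    prob P (fun ω => E ω ∧ F ω) = prob P (fun ω => F ω ∧ E ω) :=
  prob_congr fun _ => and_comm

theorem prob_nonneg (hP : ∀ ω, 0 ≤ P ω) (E : Ω → Prop) : 0 ≤ prob P E :=
  sum_nonneg fun ω _ => by split_ifs <;> simp [hP ω]

theorem prob_mono (hP : ∀ ω, 0 ≤ P ω) {E F : Ω → Prop} (h : ∀ ω, E ω → F ω) :
    prob P E ≤ prob P F :=
  sum_le_sum fun ω _ => by
    split_ifs with hE hF
    exacts [le_rfl, absurd (h ω hE) hF, hP ω, le_rfl]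

theorem prob_eq_zero_of_imp (hP : ∀ ω, 0 ≤ P ω) {E F : Ω → Prop} (h : ∀ ω, E ω → F ω)
    (hF : prob P F = 0) : prob P E = 0 :=
  le_antisymm (hF ▸ prob_mono hP h) (prob_nonneg hP E)

theorem prob_eq_sum_bool (B : Ω → Bool) (E : Ω → Prop) :
    prob P E = ∑ b, prob P (fun ω => B ω = b ∧ E ω) := by
  simp only [prob]
  rw [sum_comm]
  refine sum_congr rfl fun ω _ => ?_
  rw [Fintype.sum_bool]
  rcases Bool.eq_false_or_eq_true (B ω) with hB | hB <;> simp [hB]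

theorem prob_eq_sum_bool' (B : Ω → Bool) (E : Ω → Prop) :
    prob P E = ∑ b, prob P (fun ω => E ω ∧ B ω = b) := by
  simp only [prob_eq_sum_bool B E, prob_and_comm]

theorem prob_false_eq_one_sub (hP : IsPMF P) (B : Ω → Bool) :
    prob P (fun ω => B ω = false) = 1 - prob P (fun ω => B ω = true) := by
  rw [eq_sub_iff_add_eq, ← hP.sum_one]
  simp only [prob, ← sum_add_distrib]
  refine sum_congr rfl fun ω _ => ?_
  rcases Bool.eq_false_or_eq_true (B ω) with hB | hB <;> simp [hB]

theorem prob_mul_cprob (hP : ∀ ω, 0 ≤ P ω) (E F : Ω → Prop) :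
    prob P F * cprob P E F = prob P (fun ω => E ω ∧ F ω) := by
  rcases (prob_nonneg hP F).eq_or_lt with hF | hF
  · rw [← hF, zero_mul, prob_eq_zero_of_imp hP (fun _ => And.right) hF.symm]
  · exact mul_div_cancel₀ _ hF.ne'

theorem cprob_nonneg (hP : ∀ ω, 0 ≤ P ω) (E F : Ω → Prop) : 0 ≤ cprob P E F :=
  div_nonneg (prob_nonneg hP _) (prob_nonneg hP _)

theorem cprob_le_one (hP : ∀ ω, 0 ≤ P ω) (E F : Ω → Prop) : cprob P E F ≤ 1 :=
  div_le_one_of_le₀ (prob_mono hP fun _ => And.right) (prob_nonneg hP F)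

theorem cprob_false_eq_one_sub (B : Ω → Bool) {F : Ω → Prop} (hF : prob P F ≠ 0) :
    cprob P (fun ω => B ω = false) F = 1 - cprob P (fun ω => B ω = true) F := by
  have h := prob_eq_sum_bool (P := P) B F
  rw [Fintype.sum_bool] at h
  simp only [cprob]
  field_simp
  linarith

theorem prob_and_pos_of_cprob_pos (hP : ∀ ω, 0 ≤ P ω) {E F : Ω → Prop}
    (h : 0 < cprob P E F) : 0 < prob P (fun ω => E ω ∧ F ω) :=
  (prob_nonneg hP _).lt_of_ne fun h0 => by simp [cprob, ← h0] at h

theorem prob_mem_Ioo_of_cprob_mem_Ioo (hP : IsPMF P) (B : Ω → Bool) {F : Ω → Prop}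
    (h : 0 < cprob P (fun ω => B ω = true) F ∧ cprob P (fun ω => B ω = true) F < 1) :
    0 < prob P (fun ω => B ω = true) ∧ prob P (fun ω => B ω = true) < 1 := by
  have hBF := prob_and_pos_of_cprob_pos hP.nonneg h.1
  have hF : 0 < prob P F := hBF.trans_le (prob_mono hP.nonneg fun _ => And.right)
  have hB'F : 0 < prob P (fun ω => B ω = false ∧ F ω) :=
    prob_and_pos_of_cprob_pos hP.nonneg (by rw [cprob_false_eq_one_sub B hF.ne']; linarith)
  have hB' := hB'F.trans_le (prob_mono hP.nonneg fun _ => And.left)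
  rw [prob_false_eq_one_sub hP] at hB'
  exact ⟨hBF.trans_le (prob_mono hP.nonneg fun _ => And.left), by linarith⟩

end Probability

section TotalVariation

variable {P : Ω → ℝ}

theorem sum_abs_cprob_sub_bool (B : Ω → Bool) {E F : Ω → Prop} (hE : prob P E ≠ 0)
    (hF : prob P F ≠ 0) :
    ∑ b, |cprob P (fun ω => B ω = b) E - cprob P (fun ω => B ω = b) F| =
      2 * |cprob P (fun ω => B ω = true) E - cprob P (fun ω => B ω = true) F| := by
  rw [Fintype.sum_bool, cprob_false_eq_one_sub B hE, cprob_false_eq_one_sub B hF,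
    show ∀ x y : ℝ, 1 - x - (1 - y) = -(x - y) by intros; ring, abs_neg]
  ring

theorem prob_mul_tv_bool (hP : ∀ ω, 0 ≤ P ω) (B : Ω → Bool) {E F : Ω → Prop}
    (hEF : ∀ ω, E ω → F ω) :
    prob P E * ((1 / 2) * ∑ b, |cprob P (fun ω => B ω = b) E - cprob P (fun ω => B ω = b) F|) =
      |prob P (fun ω => B ω = true ∧ E ω) - prob P E * cprob P (fun ω => B ω = true) F| := by
  rcases (prob_nonneg hP E).eq_or_lt with hE | hE
  · rw [← hE, prob_eq_zero_of_imp hP (fun _ => And.right) hE.symm]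
    simp
  · have hF : 0 < prob P F := hE.trans_le (prob_mono hP hEF)
    rw [sum_abs_cprob_sub_bool B hE.ne' hF.ne', ← prob_mul_cprob hP, ← mul_sub, abs_mul,
      abs_of_pos hE]
    ring

end TotalVariation

/-- For the joint law of two binary variables this vanishes exactly when they are independent. -/
def tableDet (f : Bool → Bool → ℝ) : ℝ :=
  f false false * f true true - f false true * f true false

theorem tableDet_mul_row (c : Bool → ℝ) (f : Bool → Bool → ℝ) :
    tableDet (fun r a => c r * f r a) = c false * c true * tableDet f := by
  unfold tableDet
  ring

theorem sum_bool_abs_sub_mul_div (x z : Bool → ℝ) (hz : 0 < z false + z true) :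
    ∑ a, |x a - z a * ((x false + x true) / (z false + z true))| =
      2 * |x false * z true - x true * z false| / (z false + z true) := by
  have h₀ : x false - z false * ((x false + x true) / (z false + z true)) =
      (x false * z true - x true * z false) / (z false + z true) := by
    field_simp
    ring
  have h₁ : x true - z true * ((x false + x true) / (z false + z true)) =
      -((x false * z true - x true * z false) / (z false + z true)) := by
    field_simp
    ring
  rw [Fintype.sum_bool, h₀, h₁, abs_neg, abs_div, abs_of_pos hz]
  ring

theorem deltaSep_eq_sum_tableDet {P : Ω → ℝ} (hP : ∀ ω, 0 ≤ P ω) (Y A R : Ω → Bool)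
    (hY : ∀ y, 0 < prob P (fun ω => Y ω = y)) :
    deltaSep P Y A R = ∑ y, 2 *
      |tableDet (fun r a => prob P (fun ω => R ω = r ∧ A ω = a ∧ Y ω = y))| /
        prob P (fun ω => Y ω = y) := by
  have hterm : ∀ a y, prob P (fun ω => A ω = a) *
      cprob P (fun ω => Y ω = y) (fun ω => A ω = a) *
      ((1 / 2) * ∑ r : Bool,
        |cprob P (fun ω => R ω = r) (fun ω => A ω = a ∧ Y ω = y) -
          cprob P (fun ω => R ω = r) (fun ω => Y ω = y)|) =
      |prob P (fun ω => R ω = true ∧ A ω = a ∧ Y ω = y) -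
        prob P (fun ω => A ω = a ∧ Y ω = y) * cprob P (fun ω => R ω = true) (fun ω => Y ω = y)| := by
    intro a y
    rw [prob_mul_cprob hP, prob_and_comm]
    exact prob_mul_tv_bool hP R fun _ => And.right
  simp only [deltaSep, hterm]
  rw [sum_comm]
  refine sum_congr rfl fun y _ => ?_
  have hAY : ∀ a, prob P (fun ω => A ω = a ∧ Y ω = y) =
      prob P (fun ω => R ω = false ∧ A ω = a ∧ Y ω = y) +
        prob P (fun ω => R ω = true ∧ A ω = a ∧ Y ω = y) := fun a => by
    rw [prob_eq_sum_bool R, Fintype.sum_bool, add_comm]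
  have hRY : prob P (fun ω => R ω = true ∧ Y ω = y) =
      prob P (fun ω => R ω = true ∧ A ω = false ∧ Y ω = y) +
        prob P (fun ω => R ω = true ∧ A ω = true ∧ Y ω = y) := by
    rw [prob_eq_sum_bool A, Fintype.sum_bool, add_comm]
    simp only [prob_congr fun _ => and_left_comm]
  have hY' : prob P (fun ω => Y ω = y) =
      prob P (fun ω => A ω = false ∧ Y ω = y) + prob P (fun ω => A ω = true ∧ Y ω = y) := by
    rw [prob_eq_sum_bool A, Fintype.sum_bool, add_comm]
  rw [cprob, hRY, hY', sum_bool_abs_sub_mul_div _ _ (hY' ▸ hY y), hAY false, hAY true,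
    tableDet, ← abs_neg]
  ring_nf

section ConditionalIndependence

variable {P : Ω → ℝ} {Y A R : Ω → Bool} {v : Bool → ℝ}

theorem prob_and_and_true_of_cprob (hP : ∀ ω, 0 ≤ P ω)
    (hv : ∀ r a, cprob P (fun ω => Y ω = true) (fun ω => R ω = r ∧ A ω = a) = v r) (r a : Bool) :
    prob P (fun ω => R ω = r ∧ A ω = a ∧ Y ω = true) =
      v r * prob P (fun ω => R ω = r ∧ A ω = a) := by
  rw [← hv r a, mul_comm, prob_mul_cprob hP]
  exact prob_congr fun _ => and_rotate.symm

theorem prob_and_and_false_of_cprob (hP : ∀ ω, 0 ≤ P ω)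
    (hv : ∀ r a, cprob P (fun ω => Y ω = true) (fun ω => R ω = r ∧ A ω = a) = v r) (r a : Bool) :
    prob P (fun ω => R ω = r ∧ A ω = a ∧ Y ω = false) =
      (1 - v r) * prob P (fun ω => R ω = r ∧ A ω = a) := by
  have h := prob_eq_sum_bool' (P := P) Y (fun ω => R ω = r ∧ A ω = a)
  simp only [Fintype.sum_bool, prob_congr fun _ => and_assoc,
    prob_and_and_true_of_cprob hP hv] at h
  linarith

theorem prob_true_of_cprob (hP : ∀ ω, 0 ≤ P ω)
    (hv : ∀ r a, cprob P (fun ω => Y ω = true) (fun ω => R ω = r ∧ A ω = a) = v r) :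
    prob P (fun ω => Y ω = true) =
      v false * prob P (fun ω => R ω = false) + v true * prob P (fun ω => R ω = true) := by
  simp only [prob_eq_sum_bool A (fun ω => Y ω = true), prob_eq_sum_bool R (fun ω => A ω = _ ∧ _),
    prob_eq_sum_bool' A (fun ω => R ω = _), Fintype.sum_bool, prob_and_and_true_of_cprob hP hv]
  ring

theorem prob_mul_prob_mul_abs_cprob_sub_cprob (hP : ∀ ω, 0 ≤ P ω)
    (hv : ∀ r a, cprob P (fun ω => Y ω = true) (fun ω => R ω = r ∧ A ω = a) = v r) :
    prob P (fun ω => A ω = false) * prob P (fun ω => A ω = true) *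
        |cprob P (fun ω => Y ω = true) (fun ω => A ω = true) -
          cprob P (fun ω => Y ω = true) (fun ω => A ω = false)| =
      |v true - v false| * |tableDet (fun r a => prob P (fun ω => R ω = r ∧ A ω = a))| := by
  have hYA : ∀ a, prob P (fun ω => Y ω = true ∧ A ω = a) =
      v false * prob P (fun ω => R ω = false ∧ A ω = a) +
        v true * prob P (fun ω => R ω = true ∧ A ω = a) := fun a => by
    rw [prob_and_comm, prob_eq_sum_bool R, Fintype.sum_bool, prob_and_and_true_of_cprob hP hv,
      prob_and_and_true_of_cprob hP hv, add_comm]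
  have hA : ∀ a, prob P (fun ω => A ω = a) =
      prob P (fun ω => R ω = false ∧ A ω = a) + prob P (fun ω => R ω = true ∧ A ω = a) :=
    fun a => by rw [prob_eq_sum_bool R, Fintype.sum_bool, add_comm]
  rw [← abs_of_nonneg (prob_nonneg hP (fun ω => A ω = false)),
    ← abs_of_nonneg (prob_nonneg hP (fun ω => A ω = true)), ← abs_mul, ← abs_mul, ← abs_mul]
  congr 1
  calc _ = prob P (fun ω => A ω = false) *
          (prob P (fun ω => A ω = true) * cprob P (fun ω => Y ω = true) (fun ω => A ω = true)) -
        prob P (fun ω => A ω = true) *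
          (prob P (fun ω => A ω = false) * cprob P (fun ω => Y ω = true) (fun ω => A ω = false)) := by
        ring
    _ = _ := by
        rw [prob_mul_cprob hP, prob_mul_cprob hP, hYA, hYA, hA false, hA true, tableDet]
        ring

theorem deltaSep_eq_of_cprob (hP : IsPMF P)
    (hY : 0 < prob P (fun ω => Y ω = true) ∧ prob P (fun ω => Y ω = true) < 1)
    (hv : ∀ r a, cprob P (fun ω => Y ω = true) (fun ω => R ω = r ∧ A ω = a) = v r) :
    deltaSep P Y A R = 2 * |tableDet (fun r a => prob P (fun ω => R ω = r ∧ A ω = a))| *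
      (v false * v true / prob P (fun ω => Y ω = true) +
        (1 - v false) * (1 - v true) / (1 - prob P (fun ω => Y ω = true))) := by
  have hY' : ∀ y, 0 < prob P (fun ω => Y ω = y) := by
    rintro (_ | _)
    · rw [prob_false_eq_one_sub hP]
      linarith
    · exact hY.1
  have hv₀ : ∀ r, 0 ≤ v r := fun r => hv r false ▸ cprob_nonneg hP.nonneg _ _
  have hv₁ : ∀ r, 0 ≤ 1 - v r := fun r => sub_nonneg.2 (hv r false ▸ cprob_le_one hP.nonneg _ _)
  rw [deltaSep_eq_sum_tableDet hP.nonneg Y A R hY', Fintype.sum_bool, prob_false_eq_one_sub hP]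
  simp only [prob_and_and_true_of_cprob hP.nonneg hv, prob_and_and_false_of_cprob hP.nonneg hv,
    tableDet_mul_row, abs_mul, abs_of_nonneg (hv₀ _), abs_of_nonneg (hv₁ _)]
  ring

end ConditionalIndependence

theorem mixture_div_add_div_eq {p q μ π : ℝ} (hπ : π = p * μ + q * (1 - μ)) (hqp : q < p)
    (hμ : μ < 1) (hπ₀ : 0 < π) (hπ₁ : π < 1) :
    q * p / π + (1 - q) * (1 - p) / (1 - π) =
      (p - q) * ((1 - μ) / (p - π) - μ * (p - π) / (π * (1 - π))) := by
  have hpπ : p - π = (p - q) * (1 - μ) := by rw [hπ]; ring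
  have hpq : p - q ≠ 0 := by linarith
  have hμ' : 1 - μ ≠ 0 := by linarith
  have hπ₁' : 1 - π ≠ 0 := by linarith
  rw [hpπ]
  field_simp
  rw [hπ]
  ring

theorem antitoneOn_mul_div_sub_sub_mul_div {K μ π c : ℝ} (hK : 0 ≤ K) (hμ₀ : 0 ≤ μ)
    (hμ₁ : μ ≤ 1) (hc : 0 ≤ c) :
    AntitoneOn (fun x => K * ((1 - μ) / (x - π) - μ * (x - π) / c)) (Set.Ioi π) := by
  intro x hx y _ hxy
  have h₁ : (1 - μ) / (y - π) ≤ (1 - μ) / (x - π) :=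
    div_le_div_of_nonneg_left (by linarith) (sub_pos.2 hx) (by linarith)
  have h₂ : μ * (x - π) / c ≤ μ * (y - π) / c :=
    div_le_div_of_nonneg_right (mul_le_mul_of_nonneg_left (by linarith) hμ₀) hc
  exact mul_le_mul_of_nonneg_left (by linarith) hK

theorem stmt18_general (P : Ω → ℝ) (hP : IsPMF P) (Y A R : Ω → Bool)
    (hnc : ∀ a : Bool, 0 < cprob P (fun ω => R ω = true) (fun ω => A ω = a) ∧
      cprob P (fun ω => R ω = true) (fun ω => A ω = a) < 1)
    (p q : ℝ)
    (hp : ∀ a : Bool,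
      cprob P (fun ω => Y ω = true) (fun ω => R ω = true ∧ A ω = a) = p)
    (hq : ∀ a : Bool,
      cprob P (fun ω => Y ω = true) (fun ω => R ω = false ∧ A ω = a) = q)
    (hqp : q ≤ p)
    (hne : (p, q) ≠ (prob P (fun ω => Y ω = true), prob P (fun ω => Y ω = true))) :
    let π : ℝ := prob P (fun ω => Y ω = true)
    let μ : ℝ := prob P (fun ω => R ω = true)
    let K : ℝ := 2 * prob P (fun ω => A ω = false) * prob P (fun ω => A ω = true) *
      |cprob P (fun ω => Y ω = true) (fun ω => A ω = true) -
        cprob P (fun ω => Y ω = true) (fun ω => A ω = false)|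
    deltaSep P Y A R = K * ((1 - μ) / (p - π) - μ * (p - π) / (π * (1 - π))) ∧
      AntitoneOn (fun p' : ℝ => K * ((1 - μ) / (p' - π) - μ * (p' - π) / (π * (1 - π))))
        (Set.Ioi π) := by
  intro π μ K
  have hv : ∀ r a, cprob P (fun ω => Y ω = true) (fun ω => R ω = r ∧ A ω = a) =
      bif r then p else q := by
    rintro (_ | _) a
    exacts [hq a, hp a]
  obtain ⟨hμ₀, hμ₁⟩ := prob_mem_Ioo_of_cprob_mem_Ioo hP R (hnc true)
  have hπ : π = p * μ + q * (1 - μ) := by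
    simp only [π, μ]
    rw [prob_true_of_cprob hP.nonneg hv, prob_false_eq_one_sub hP]
    simp only [cond_true, cond_false]
    ring
  have hq₀ : 0 ≤ q := hq true ▸ cprob_nonneg hP.nonneg _ _
  have hp₁ : p ≤ 1 := hp true ▸ cprob_le_one hP.nonneg _ _
  have hqp : q < p := hqp.lt_of_ne fun h => hne <| by
    have : π = q := by rw [hπ, h]; ring
    rw [← h]
    exact congrArg (fun x => (x, x)) this.symm
  have hπ₀ : 0 < π := by rw [hπ]; nlinarith
  have hπ₁ : π < 1 := by rw [hπ]; nlinarith
  have hK : K = 2 * (p - q) * |tableDet (fun r a => prob P (fun ω => R ω = r ∧ A ω = a))| := by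
    simp only [K, mul_assoc (2 : ℝ), prob_mul_prob_mul_abs_cprob_sub_cprob hP.nonneg hv,
      cond_true, cond_false, abs_of_pos (sub_pos.2 hqp)]
  refine ⟨?_, antitoneOn_mul_div_sub_sub_mul_div (hK ▸ by positivity) hμ₀.le hμ₁.le
    (mul_pos hπ₀ (sub_pos.2 hπ₁)).le⟩
  rw [deltaSep_eq_of_cprob hP ⟨hπ₀, hπ₁⟩ hv, hK]
  simp only [cond_true, cond_false]
  rw [show prob P (fun ω => Y ω = true) = π from rfl, mixture_div_add_div_eq hπ hqp hμ₁ hπ₀ hπ₁]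
  ring

/-- Let `R = R(S, A)` be a classifier, nonconstant within each
group, satisfying `P(Y = 1 ∣ R = 1, A = a) = p` and `P(Y = 1 ∣ R = 0, A = a) = q`
for both groups, with `(p, q) ≠ (π, π)` and `q ≤ p`.  Then the deviation from
separation satisfies
`Δ_sep(R) = K ((1 − μ)/(p − π) − μ (p − π)/(π(1 − π)))`, where
`K = 2 P(A = 0) P(A = 1) |π¹ − π⁰|`, `π = P(Y = 1)` and `μ = P(R = 1)`.
Moreover, for fixed `μ`, the right-hand side is nonincreasing in `p` on `p > π`. -/
theorem stmt18 (P : Ω → ℝ) (hP : IsPMF P) (Y A R : Ω → Bool) (S : Ω → ℝ)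
    (hA : ∀ a : Bool, 0 < prob P (fun ω => A ω = a))
    (hcal : GroupCalibrated P Y A S)
    (hR : IsClassifier P Y A S R)
    (hnc : ∀ a : Bool, 0 < cprob P (fun ω => R ω = true) (fun ω => A ω = a) ∧
      cprob P (fun ω => R ω = true) (fun ω => A ω = a) < 1)
    (p q : ℝ)
    (hp : ∀ a : Bool,
      cprob P (fun ω => Y ω = true) (fun ω => R ω = true ∧ A ω = a) = p)
    (hq : ∀ a : Bool,
      cprob P (fun ω => Y ω = true) (fun ω => R ω = false ∧ A ω = a) = q)
    (hqp : q ≤ p)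
    (hne : (p, q) ≠ (prob P (fun ω => Y ω = true), prob P (fun ω => Y ω = true))) :
    let π : ℝ := prob P (fun ω => Y ω = true)
    let μ : ℝ := prob P (fun ω => R ω = true)
    let K : ℝ := 2 * prob P (fun ω => A ω = false) * prob P (fun ω => A ω = true) *
      |cprob P (fun ω => Y ω = true) (fun ω => A ω = true) -
        cprob P (fun ω => Y ω = true) (fun ω => A ω = false)|
    deltaSep P Y A R = K * ((1 - μ) / (p - π) - μ * (p - π) / (π * (1 - π))) ∧
      AntitoneOn (fun p' : ℝ => K * ((1 - μ) / (p' - π) - μ * (p' - π) / (π * (1 - π))))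
        (Set.Ioi π) :=
  stmt18_general P hP Y A R hnc p q hp hq hqp hne
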